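/- (Loss descent of the abc-PSI.) Assume ∇ℓ is Lipschitz with constant c_l > 0 in Frobenius norm. Let Û1 ∈ ℝ^{m×q} have orthonormal columns, L0 ∈ ℝ^{n×q}, h > 0, and set Y0 = Û1 L0ᵀ, L1ᵀ = L0ᵀ − h Û1ᵀ ∇ℓ(Y0), and Ŷ1 = Û1 L1ᵀ. Then ℓ(Ŷ1) ≤ ℓ(Y0) − (1 − h c_l / 2) · h · ‖Û1 Û1ᵀ ∇ℓ(Y0)‖². In particular, if h ≤ 2/c_l, the loss does not increase. -/

import Mathlib

open Matrix Set MeasureTheory Filter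

attribute [local instance] Matrix.frobeniusNormedAddCommGroup Matrix.frobeniusNormedSpace

/-- The continuous linear functional `H ↦ ⟨G, H⟩ = tr(Gᵀ H)`, i.e. pairing with `G` in the
Frobenius inner product.  `hgrad : ∀ Y, HasFDerivAt ℓ (frobCLM (G Y)) Y` then states that
`G Y` is the gradient of `ℓ` at `Y` with respect to the Frobenius inner product. -/
noncomputable def frobCLM {m n : ℕ} (G : Matrix (Fin m) (Fin n) ℝ) :
    Matrix (Fin m) (Fin n) ℝ →L[ℝ] ℝ :=
  LinearMap.toContinuousLinearMap
    { toFun := fun H => (Gᵀ * H).trace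
      map_add' := by intro x y; simp [Matrix.mul_add]
      map_smul' := by intro c x; simp [Matrix.mul_smul] }

/-!
The step `Ŷ1 - Y0 = -h Û1 Û1ᵀ ∇ℓ(Y0)` is a gradient step projected onto the range of `Û1`. The
descent lemma for a function with `c_l`-Lipschitz gradient gives
`ℓ(Y0 + D) ≤ ℓ(Y0) + ⟨∇ℓ(Y0), D⟩ + c_l/2 ‖D‖²`, and since `Û1 Û1ᵀ` is an orthogonal projection,
`⟨∇ℓ(Y0), -h Û1 Û1ᵀ ∇ℓ(Y0)⟩ = -h ‖Û1 Û1ᵀ ∇ℓ(Y0)‖²`. The descent lemma itself follows by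
restricting `ℓ` to the segment and comparing it with its tangent parabola, which stays above because
the derivative along the segment grows at most linearly.
-/

open scoped InnerProductSpace

theorem image_le_of_hasDerivAt_sub_le {φ φ' : ℝ → ℝ} {K : ℝ}
    (hφ : ∀ t, HasDerivAt φ (φ' t) t) (hφ' : ∀ t, 0 ≤ t → φ' t - φ' 0 ≤ K * t)
    {t : ℝ} (ht : 0 ≤ t) : φ t ≤ φ 0 + φ' 0 * t + K / 2 * t ^ 2 := by
  let ψ : ℝ → ℝ := fun s ↦ φ 0 + φ' 0 * s + K / 2 * s ^ 2 - φ s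
  have hψ : ∀ s, HasDerivAt ψ (φ' 0 + K * s - φ' s) s := fun s ↦
    (((((hasDerivAt_id s).const_mul (φ' 0)).const_add (φ 0)).add
      (((hasDerivAt_id s).pow 2).const_mul (K / 2))).sub (hφ s)).congr_deriv (by simp; ring)
  have hψ_mono : MonotoneOn ψ (Ici 0) := by
    refine monotoneOn_of_hasDerivWithinAt_nonneg (convex_Ici 0)
      (fun s _ ↦ (hψ s).continuousAt.continuousWithinAt) (fun s _ ↦ (hψ s).hasDerivWithinAt) ?_
    rw [interior_Ici]
    intro s hs
    linarith [hφ' s hs.le]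
  have hψ_le : ψ 0 ≤ ψ t := hψ_mono self_mem_Ici ht ht
  simp only [ψ, mul_zero, add_zero, zero_pow two_ne_zero, sub_self] at hψ_le
  linarith

theorem image_add_le_of_lipschitz_fderiv {E : Type*} [NormedAddCommGroup E] [NormedSpace ℝ E]
    {f : E → ℝ} {f' : E → E →L[ℝ] ℝ} {L : ℝ} (hf : ∀ x, HasFDerivAt f (f' x) x)
    (hL : ∀ x y d, f' x d - f' y d ≤ L * ‖x - y‖ * ‖d‖) (x d : E) :
    f (x + d) ≤ f x + f' x d + L / 2 * ‖d‖ ^ 2 := by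
  have hline : ∀ t : ℝ, HasDerivAt (fun t : ℝ ↦ f (x + t • d)) (f' (x + t • d) d) t := fun t ↦ by
    have hseg := ((hasDerivAt_id t).smul_const d).const_add x
    rw [one_smul] at hseg
    exact (hf (x + t • d)).comp_hasDerivAt t hseg
  have hslope : ∀ t : ℝ, 0 ≤ t → f' (x + t • d) d - f' (x + (0 : ℝ) • d) d ≤ L * ‖d‖ ^ 2 * t :=
    fun t ht ↦ calc
      f' (x + t • d) d - f' (x + (0 : ℝ) • d) d ≤ L * ‖x + t • d - x‖ * ‖d‖ := by
        simpa using hL (x + t • d) x d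
      _ = L * ‖d‖ ^ 2 * t := by
        rw [add_sub_cancel_left, norm_smul, Real.norm_of_nonneg ht]; ring
  have := image_le_of_hasDerivAt_sub_le hline hslope zero_le_one
  simp only [one_smul, zero_smul, add_zero, mul_one, one_pow] at this
  linarith

section Frobenius

variable {m n : Type*} [Fintype m] [Fintype n]

/-- The Frobenius norm is the norm of the matrix viewed as an element of `ℓ²(m, ℓ²(n))`; in that
picture `tr(Aᵀ B)` is the inner product. -/
theorem trace_transpose_mul_eq_inner (A B : Matrix m n ℝ) :
    (Aᵀ * B).trace =
      ⟪WithLp.toLp 2 fun i ↦ WithLp.toLp 2 (A i), WithLp.toLp 2 fun i ↦ WithLp.toLp 2 (B i)⟫_ℝ := by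
  simp [Matrix.trace, Matrix.mul_apply, PiLp.inner_apply, Finset.sum_comm (γ := m), mul_comm]

theorem trace_transpose_mul_self (A : Matrix m n ℝ) : (Aᵀ * A).trace = ‖A‖ ^ 2 := by
  rw [trace_transpose_mul_eq_inner, real_inner_self_eq_norm_sq]
  rfl

theorem trace_transpose_mul_le (A B : Matrix m n ℝ) : (Aᵀ * B).trace ≤ ‖A‖ * ‖B‖ := by
  rw [trace_transpose_mul_eq_inner]
  exact real_inner_le_norm _ _

theorem trace_transpose_mul_projection {q : Type*} [Fintype q] [DecidableEq q]
    (U : Matrix m q ℝ) (hU : Uᵀ * U = 1) (A : Matrix m n ℝ) : (Aᵀ * (U * Uᵀ * A)).trace = ‖U * Uᵀ * A‖ ^ 2 := by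
  rw [← trace_transpose_mul_self]
  congr 1
  simp only [Matrix.transpose_mul, Matrix.transpose_transpose, Matrix.mul_assoc]
  rw [← Matrix.mul_assoc Uᵀ U, hU, Matrix.one_mul]

end Frobenius

section frobCLM

variable {m n : ℕ}

theorem frobCLM_apply (A B : Matrix (Fin m) (Fin n) ℝ) : frobCLM A B = (Aᵀ * B).trace := rfl

theorem frobCLM_apply_sub_le {G : Matrix (Fin m) (Fin n) ℝ → Matrix (Fin m) (Fin n) ℝ} {L : ℝ}
    (hG : ∀ X Y, ‖G X - G Y‖ ≤ L * ‖X - Y‖) (X Y D : Matrix (Fin m) (Fin n) ℝ) :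
    frobCLM (G X) D - frobCLM (G Y) D ≤ L * ‖X - Y‖ * ‖D‖ := by
  rw [frobCLM_apply, frobCLM_apply, ← Matrix.trace_sub, ← Matrix.sub_mul, ← Matrix.transpose_sub]
  exact (trace_transpose_mul_le _ _).trans (by gcongr; exact hG X Y)

theorem image_add_le_of_lipschitz_gradient {ℓ : Matrix (Fin m) (Fin n) ℝ → ℝ}
    {G : Matrix (Fin m) (Fin n) ℝ → Matrix (Fin m) (Fin n) ℝ} {L : ℝ}
    (hgrad : ∀ Y, HasFDerivAt ℓ (frobCLM (G Y)) Y) (hG : ∀ X Y, ‖G X - G Y‖ ≤ L * ‖X - Y‖)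
    (Y D : Matrix (Fin m) (Fin n) ℝ) :
    ℓ (Y + D) ≤ ℓ Y + ((G Y)ᵀ * D).trace + L / 2 * ‖D‖ ^ 2 :=
  image_add_le_of_lipschitz_fderiv hgrad (frobCLM_apply_sub_le hG) Y D

end frobCLM

/-- Loss descent of the abc-PSI: for the explicit-Euler abc-PSI update
`Ŷ1 = Û1 (L0ᵀ − h Û1ᵀ ∇ℓ(Y0))` with `Y0 = Û1 L0ᵀ`,
`ℓ(Ŷ1) ≤ ℓ(Y0) − (1 − h c_l/2) h ‖Û1 Û1ᵀ ∇ℓ(Y0)‖²`; in particular the loss does not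
increase when `h ≤ 2/c_l`. -/
theorem abcpsi_loss_descent {m n q : ℕ}
    (ℓ : Matrix (Fin m) (Fin n) ℝ → ℝ)
    (G : Matrix (Fin m) (Fin n) ℝ → Matrix (Fin m) (Fin n) ℝ)
    (hgrad : ∀ Y, HasFDerivAt ℓ (frobCLM (G Y)) Y)
    (cl : ℝ) (hcl : 0 < cl)
    (hlip : ∀ Z1 Z2, ‖G Z1 - G Z2‖ ≤ cl * ‖Z1 - Z2‖)
    (Uhat1 : Matrix (Fin m) (Fin q) ℝ) (hUhat1 : Uhat1ᵀ * Uhat1 = 1)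
    (L0 : Matrix (Fin n) (Fin q) ℝ) (h : ℝ) (hh : 0 < h) :
    ℓ (Uhat1 * (L0ᵀ - h • (Uhat1ᵀ * G (Uhat1 * L0ᵀ)))) ≤
        ℓ (Uhat1 * L0ᵀ)
          - (1 - h * cl / 2) * h * ‖Uhat1 * Uhat1ᵀ * G (Uhat1 * L0ᵀ)‖ ^ 2 ∧
    (h ≤ 2 / cl →
      ℓ (Uhat1 * (L0ᵀ - h • (Uhat1ᵀ * G (Uhat1 * L0ᵀ)))) ≤ ℓ (Uhat1 * L0ᵀ)) := by
  set Y0 := Uhat1 * L0ᵀ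
  set PG := Uhat1 * Uhat1ᵀ * G Y0
  have hstep : Uhat1 * (L0ᵀ - h • (Uhat1ᵀ * G Y0)) = Y0 + (-h) • PG := by
    rw [Matrix.mul_sub, Matrix.mul_smul, ← Matrix.mul_assoc, neg_smul, ← sub_eq_add_neg]
  have hdesc := image_add_le_of_lipschitz_gradient hgrad hlip Y0 ((-h) • PG)
  rw [Matrix.mul_smul, Matrix.trace_smul, trace_transpose_mul_projection Uhat1 hUhat1,
    norm_smul, mul_pow, Real.norm_eq_abs, sq_abs, smul_eq_mul, ← hstep] at hdesc
  refine ⟨by linarith, fun hh_le ↦ ?_⟩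
  have hhcl : h * cl ≤ 2 := (le_div_iff₀ hcl).mp hh_le
  nlinarith [mul_nonneg (mul_nonneg hh.le (sub_nonneg.mpr hhcl)) (sq_nonneg ‖PG‖)]
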